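/- arXiv:0805.1539 — 4 statements merged into one kernel-verified Lean document; each statement's English description precedes it below -/
import Mathlib

section
/- Let X be a geodesic metric space with convex metric (Busemann non-positively curved): for any x, y, z ∈ X, the midpoint m of x,y and the midpoint n of x,z satisfy d(m,n) ≤ d(y,z)/2. Given 4p points y_{i,j} (i ∈ {0,1,2,3}, j ∈ {1,…,p}, p ≥ 2) such that each of the listed quadruples (y_{0,j}, y_{1,j}, y_{2,j}, y_{3,j}) for j = 1,…,p, and the 'shifted' quadruples (y_{0,2}, y_{1,1}, y_{2,p}, y_{3,p-1}), (y_{0,3}, y_{1,2}, y_{2,1}, y_{3,p}), (y_{0,j+3}, y_{1,j+2}, y_{2,j+1}, y_{3,j}) for appropriate indices, and (y_{0,1}, y_{1,p}, y_{2,p-1}, y_{3,p-2}), consists of four points lying in order on a geodesic segment and dividing it into three equal parts. Then all points y_{1,j} (j = 1,…,p) coincide, and all points y_{2,j} coincide. -/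
/-! Write `a j = d(y₁ⱼ, y₁ⱼ₊₁)` and `b j = d(y₂ⱼ, y₂ⱼ₊₁)`. Convexity of the metric at `y₀ⱼ₊₁`
and at `y₃ⱼ`, followed by the triangle inequality, gives `a j ≤ (b (j-1) + b j) / 2` and
`b j ≤ (a j + a (j+1)) / 2`; on a cycle this forces `a` and `b` to be one constant `t`
(maximum principle). Then `d(y₁ⱼ, y₁ⱼ₊₂) = 2t`, so the cyclic sequence `y₁` is locally a
geodesic, and convexity doubles this: `d(y₁ⱼ, y₁ⱼ₊₂ⁿ) = 2ⁿ t`. A finite set is bounded,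
so `t = 0`. -/

theorem ZMod.induction_add_one {n : ℕ} [NeZero n] {P : ZMod n → Prop} {j₀ : ZMod n}
    (h₀ : P j₀) (hstep : ∀ j, P j → P (j + 1)) (k : ZMod n) : P k := by
  have hnat : ∀ m : ℕ, P (j₀ + m) := by
    intro m
    induction m with
    | zero => simpa using h₀
    | succ m ih => simpa [add_assoc] using hstep _ ih
  simpa using hnat (k - j₀).val

theorem ZMod.eq_of_forall_eq_add_one {n : ℕ} [NeZero n] {α : Type*} {w : ZMod n → α}
    (h : ∀ j, w (j + 1) = w j) (j k : ZMod n) : w j = w k :=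
  ZMod.induction_add_one (P := fun i => w i = w k) rfl (fun i hi => (h i).trans hi) j

theorem ZMod.exists_eq_const_of_le_average {n : ℕ} [NeZero n] {a b : ZMod n → ℝ}
    (ha : ∀ j, a j ≤ (b (j - 1) + b j) / 2) (hb : ∀ j, b j ≤ (a j + a (j + 1)) / 2) :
    ∃ M, (∀ j, a j = M) ∧ ∀ j, b j = M := by
  obtain ⟨j₀, hj₀⟩ := Finite.exists_max a
  obtain ⟨k₀, hk₀⟩ := Finite.exists_max b
  have hbM : ∀ j, b j ≤ a j₀ := fun j =>
    (hk₀ j).trans ((hb k₀).trans (by linarith [hj₀ k₀, hj₀ (k₀ + 1)]))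
  have hb_of_ha : ∀ j, a j = a j₀ → b j = a j₀ := fun j hj => by
    linarith [ha j, hbM (j - 1), hbM j]
  have haM : ∀ j, a j = a j₀ :=
    ZMod.induction_add_one rfl fun j hj => by
      linarith [hb j, hb_of_ha j hj, hj₀ (j + 1)]
  exact ⟨a j₀, haM, fun j => hb_of_ha j (haM j)⟩

section Busemann

variable {X : Type*} [MetricSpace X]

def IsMidpoint (x y m : X) : Prop :=
  dist x m = dist x y / 2 ∧ dist m y = dist x y / 2

/-- The paper's `a - b - c - d`. -/
def IsTrisection (a b c d : X) : Prop :=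
  dist a b = dist a d / 3 ∧ dist b c = dist a d / 3 ∧ dist c d = dist a d / 3 ∧
    dist a c = 2 * dist a d / 3 ∧ dist b d = 2 * dist a d / 3

theorem IsTrisection.isMidpoint_left {a b c d : X} (h : IsTrisection a b c d) :
    IsMidpoint a c b := by
  obtain ⟨hab, hbc, -, hac, -⟩ := h
  constructor <;> linarith

theorem IsTrisection.isMidpoint_right {a b c d : X} (h : IsTrisection a b c d) :
    IsMidpoint d b c := by
  obtain ⟨-, hbc, hcd, -, hbd⟩ := h
  rw [IsMidpoint, dist_comm d c, dist_comm d b, dist_comm c b]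
  constructor <;> linarith

def IsBusemannConvex (X : Type*) [MetricSpace X] : Prop :=
  ∀ x y z m n : X, IsMidpoint x y m → IsMidpoint x z n → dist m n ≤ dist y z / 2

def IsLocalGeodesic {G : Type*} [Add G] (u : G → X) (g : G) (t : ℝ) : Prop :=
  (∀ j, dist (u j) (u (j + g)) = t) ∧ ∀ j, dist (u j) (u (j + (g + g))) = 2 * t

variable (hX : IsBusemannConvex X)
include hX

theorem IsLocalGeodesic.double {G : Type*} [AddSemigroup G] {u : G → X} {g : G} {t : ℝ}
    (hu : IsLocalGeodesic u g t) : IsLocalGeodesic u (g + g) (2 * t) := by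
  obtain ⟨h₁, h₂⟩ := hu
  refine ⟨h₂, fun j => ?_⟩
  simp only [← add_assoc] at h₂ ⊢
  have hm : IsMidpoint (u (j + g + g)) (u j) (u (j + g)) := by
    rw [IsMidpoint, dist_comm, h₁, dist_comm, h₂, dist_comm, h₁]
    constructor <;> ring
  have hn : IsMidpoint (u (j + g + g)) (u (j + g + g + g + g)) (u (j + g + g + g)) := by
    rw [IsMidpoint, h₁, h₂, h₁]
    constructor <;> ring
  have hlower := hX _ _ _ _ _ hm hn
  rw [h₂] at hlower
  have hupper := dist_triangle (u j) (u (j + g + g)) (u (j + g + g + g + g))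
  rw [h₂, h₂] at hupper
  linarith

theorem IsLocalGeodesic.two_pow_nsmul {G : Type*} [AddMonoid G] {u : G → X} {g : G} {t : ℝ}
    (hu : IsLocalGeodesic u g t) (n : ℕ) : IsLocalGeodesic u (2 ^ n • g) (2 ^ n * t) := by
  induction n with
  | zero => simpa using hu
  | succ n ih =>
    rw [pow_succ, mul_two, add_nsmul, pow_succ, mul_comm _ (2 : ℝ), mul_assoc]
    exact ih.double hX

theorem IsLocalGeodesic.eq_zero {G : Type*} [AddMonoid G] [Finite G] {u : G → X} {g : G}
    {t : ℝ} (hu : IsLocalGeodesic u g t) : t = 0 := by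
  obtain ⟨C, hC⟩ := Metric.isBounded_iff.1 (Set.finite_range u).isBounded
  have ht : 0 ≤ t := (hu.1 0).symm ▸ dist_nonneg
  have hbound : ∀ n : ℕ, 2 ^ n * t ≤ C := fun n =>
    (hu.two_pow_nsmul hX n).1 0 ▸ hC ⟨_, rfl⟩ ⟨_, rfl⟩
  by_contra hne
  obtain ⟨n, hn⟩ := pow_unbounded_of_one_lt (C / t) (one_lt_two (α := ℝ))
  rw [div_lt_iff₀ (ht.lt_of_ne' hne)] at hn
  linarith [hbound n]

def IsTape {p : ℕ} (y : Fin 4 → ZMod p → X) : Prop :=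
  (∀ j, IsTrisection (y 0 j) (y 1 j) (y 2 j) (y 3 j)) ∧
    ∀ j, IsTrisection (y 0 (j + 1)) (y 1 j) (y 2 (j - 1)) (y 3 (j - 2))

namespace IsTape

variable {p : ℕ} {y : Fin 4 → ZMod p → X} (hy : IsTape y)
include hy

theorem dist_one_le (j : ZMod p) :
    dist (y 1 j) (y 1 (j + 1)) ≤ (dist (y 2 (j - 1)) (y 2 j) + dist (y 2 j) (y 2 (j + 1))) / 2 := by
  have h := hX _ _ _ _ _ (hy.2 j).isMidpoint_left (hy.1 (j + 1)).isMidpoint_left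
  linarith [dist_triangle (y 2 (j - 1)) (y 2 j) (y 2 (j + 1))]

theorem dist_two_le (j : ZMod p) :
    dist (y 2 j) (y 2 (j + 1)) ≤ dist (y 1 j) (y 1 (j + 2)) / 2 := by
  have h := (hy.2 (j + 2)).isMidpoint_right
  rw [show j + 2 - 1 = j + 1 by ring, show j + 2 - 2 = j by ring] at h
  exact hX _ _ _ _ _ (hy.1 j).isMidpoint_right h

end IsTape

end Busemann

theorem stmt3_general {X : Type*} [MetricSpace X]
    (hconv : ∀ x y z m n : X,
      dist x m = dist x y / 2 → dist m y = dist x y / 2 →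
      dist x n = dist x z / 2 → dist n z = dist x z / 2 →
      dist m n ≤ dist y z / 2)
    (p : ℕ) (hp : 2 ≤ p)
    (y : Fin 4 → ZMod p → X)
    (B3 : X → X → X → X → Prop)
    (hB3 : ∀ a b c d : X, B3 a b c d ↔
      (dist a b = dist a d / 3 ∧ dist b c = dist a d / 3 ∧ dist c d = dist a d / 3 ∧
        dist a c = 2 * dist a d / 3 ∧ dist b d = 2 * dist a d / 3))
    (hrows : ∀ j : ZMod p, B3 (y 0 j) (y 1 j) (y 2 j) (y 3 j))
    (hshift : ∀ j : ZMod p, B3 (y 0 (j + 1)) (y 1 j) (y 2 (j - 1)) (y 3 (j - 2))) :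
    (∀ j k : ZMod p, y 1 j = y 1 k) ∧ (∀ j k : ZMod p, y 2 j = y 2 k) := by
  have : NeZero p := ⟨by omega⟩
  have hX : IsBusemannConvex X := fun x y z m n hm hn => hconv x y z m n hm.1 hm.2 hn.1 hn.2
  have hy : IsTape y := ⟨fun j => (hB3 _ _ _ _).1 (hrows j), fun j => (hB3 _ _ _ _).1 (hshift j)⟩
  obtain ⟨t, ha, hb⟩ := ZMod.exists_eq_const_of_le_average
    (a := fun j => dist (y 1 j) (y 1 (j + 1))) (b := fun j => dist (y 2 j) (y 2 (j + 1)))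
    (fun j => by simpa only [sub_add_cancel] using hy.dist_one_le hX j)
    (fun j => by
      rw [show j + 1 + 1 = j + 2 by ring]
      linarith [hy.dist_two_le hX j, dist_triangle (y 1 j) (y 1 (j + 1)) (y 1 (j + 2))])
  have hgeod : IsLocalGeodesic (y 1) 1 t := by
    refine ⟨ha, fun j => ?_⟩
    have h₁ := ha (j + 1)
    rw [add_assoc] at h₁
    rw [one_add_one_eq_two] at h₁ ⊢
    linarith [hy.dist_two_le hX j, hb j, ha j, dist_triangle (y 1 j) (y 1 (j + 1)) (y 1 (j + 2))]
  have ht : t = 0 := hgeod.eq_zero hX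
  subst ht
  exact ⟨ZMod.eq_of_forall_eq_add_one fun j => (dist_eq_zero.1 (ha j)).symm,
    ZMod.eq_of_forall_eq_add_one fun j => (dist_eq_zero.1 (hb j)).symm⟩

/-- The tape lemma: in a geodesic space with convex (Busemann) metric, given `4p` points
`y i j` (`i ∈ Fin 4`, `j ∈ ZMod p`, `p ≥ 2`) such that each row quadruple
`(y 0 j, y 1 j, y 2 j, y 3 j)` and each shifted quadruple
`(y 0 (j+1), y 1 j, y 2 (j-1), y 3 (j-2))` lies in order on a geodesic segment dividing it
into three equal parts, all the points `y 1 j` coincide and all the points `y 2 j`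
coincide. -/
theorem stmt3 {X : Type*} [MetricSpace X]
    (hgeo : ∀ x y : X, ∃ m : X, dist x m = dist x y / 2 ∧ dist m y = dist x y / 2)
    (hconv : ∀ x y z m n : X,
      dist x m = dist x y / 2 → dist m y = dist x y / 2 →
      dist x n = dist x z / 2 → dist n z = dist x z / 2 →
      dist m n ≤ dist y z / 2)
    (p : ℕ) (hp : 2 ≤ p)
    (y : Fin 4 → ZMod p → X)
    (B3 : X → X → X → X → Prop)
    (hB3 : ∀ a b c d : X, B3 a b c d ↔
      (dist a b = dist a d / 3 ∧ dist b c = dist a d / 3 ∧ dist c d = dist a d / 3 ∧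
        dist a c = 2 * dist a d / 3 ∧ dist b d = 2 * dist a d / 3))
    (hrows : ∀ j : ZMod p, B3 (y 0 j) (y 1 j) (y 2 j) (y 3 j))
    (hshift : ∀ j : ZMod p, B3 (y 0 (j + 1)) (y 1 j) (y 2 (j - 1)) (y 3 (j - 2))) :
    (∀ j k : ZMod p, y 1 j = y 1 k) ∧ (∀ j k : ZMod p, y 2 j = y 2 k) :=
  stmt3_general hconv p hp y B3 hB3 hrows hshift
end

section
/- Let X be a proper metric space, x₀ ∈ X, y ∈ X with y ≠ x₀. Define the spherical shadow Shadow_y(x₁, ρ) = { z ∈ X : d(y,z) = d(y,x₁) + ρ and x₁ lies on some geodesic segment [y,z] } ∩ S(x₁, ρ). Then for any ρ, ε > 0 there exists δ > 0 such that for every point x₁ with d(x₀,x₁) < δ and d(y,x₁) = d(y,x₀), one has Shadow_y(x₁, ρ) ⊆ N_ε(Shadow_y(x₀, ρ)), where N_ε denotes the open ε-neighbourhood. -/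
/-!
The graph `{(x₁, z) | z ∈ Shadow_y(x₁, ρ)}` is closed, being cut out by equations between
distances, and over a neighbourhood of `x₀` it lies in `X × K` for the compact ball
`K = B̄(x₀, ρ + 1)`. A closed graph with compact fibres varies upper semicontinuously: the
complement of the `ε`-neighbourhood of the fibre over `x₀`, intersected with `K`, is compact and
misses the graph over `x₀`, hence misses it over every point near `x₀`.
-/

open Filter Topology Metric

theorem IsClosed.eventually_fiber_subset {X Y : Type*} [TopologicalSpace X]
    [TopologicalSpace Y] {C : Set (X × Y)} (hC : IsClosed C) {K : Set Y} (hK : IsCompact K)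
    {x₀ : X} (hCK : ∀ᶠ x in 𝓝 x₀, ∀ z, (x, z) ∈ C → z ∈ K) {U : Set Y} (hU : IsOpen U)
    (hCU : ∀ z, (x₀, z) ∈ C → z ∈ U) :
    ∀ᶠ x in 𝓝 x₀, ∀ z, (x, z) ∈ C → z ∈ U := by
  have hmiss : ∀ᶠ x in 𝓝 x₀, ∀ z ∈ K \ U, (x, z) ∉ C :=
    (hK.diff hU).eventually_forall_of_forall_eventually fun z hz ↦
      hC.isOpen_compl.mem_nhds fun hz₀ ↦ hz.2 (hCU z hz₀)
  filter_upwards [hCK, hmiss] with x hxK hxU z hz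
  by_contra hzU
  exact hxU z ⟨hxK z hz, hzU⟩ hz

theorem isClosed_setOf_dist_eq_and_dist_add_dist_eq {X : Type*} [PseudoMetricSpace X]
    (y : X) (ρ : ℝ) :
    IsClosed {p : X × X | dist p.1 p.2 = ρ ∧ dist y p.1 + dist p.1 p.2 = dist y p.2} :=
  (isClosed_eq (by fun_prop) continuous_const).inter (isClosed_eq (by fun_prop) (by fun_prop))

theorem eventually_mem_closedBall_of_dist_eq {X : Type*} [PseudoMetricSpace X] (x₀ : X)
    (ρ : ℝ) : ∀ᶠ x in 𝓝 x₀, ∀ z, dist x z = ρ → z ∈ closedBall x₀ (ρ + 1) := by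
  filter_upwards [ball_mem_nhds x₀ one_pos] with x hx z hz
  rw [mem_closedBall]
  calc dist z x₀ ≤ dist z x + dist x x₀ := dist_triangle _ _ _
    _ ≤ ρ + 1 := by rw [dist_comm, hz]; linarith [mem_ball.mp hx]

theorem stmt7_general {X : Type*} [MetricSpace X] [ProperSpace X]
    (x₀ y : X)
    (Shadow : X → X → ℝ → Set X)
    (hShadow : ∀ (y' x₁ : X) (ρ : ℝ), Shadow y' x₁ ρ =
      {z : X | dist x₁ z = ρ ∧ dist y' x₁ + dist x₁ z = dist y' z}) :
    ∀ ρ ε : ℝ, 0 < ρ → 0 < ε → ∃ δ > 0, ∀ x₁ : X,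
      dist x₀ x₁ < δ → dist y x₁ = dist y x₀ →
      Shadow y x₁ ρ ⊆ {w : X | ∃ z ∈ Shadow y x₀ ρ, dist w z < ε} := by
  intro ρ ε _ _
  have hsemicont : ∀ᶠ x in 𝓝 x₀, Shadow y x ρ ⊆ thickening ε (Shadow y x₀ ρ) := by
    simp only [hShadow]
    exact (isClosed_setOf_dist_eq_and_dist_add_dist_eq y ρ).eventually_fiber_subset
      (isCompact_closedBall x₀ (ρ + 1))
      ((eventually_mem_closedBall_of_dist_eq x₀ ρ).mono fun _ h z hz ↦ h z hz.1)
      isOpen_thickening fun _ hz ↦ self_subset_thickening (by positivity) _ hz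
  obtain ⟨δ, hδ, hball⟩ := Metric.eventually_nhds_iff.mp hsemicont
  refine ⟨δ, hδ, fun x₁ hx₁ _ w hw ↦ mem_thickening_iff.mp ?_⟩
  exact hball (by rwa [dist_comm]) hw

/-- Semicontinuity of spherical shadows: in a proper geodesic metric space, for points
`x₁` close to `x₀` on the same sphere around `y`, the spherical shadow of `x₁` of radius
`ρ` relative to `y` lies in the `ε`-neighbourhood of that of `x₀`. -/
theorem stmt7 {X : Type*} [MetricSpace X] [ProperSpace X]
    (hgeo : ∀ a b : X, ∀ r : ℝ, 0 ≤ r → r ≤ dist a b →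
      ∃ z : X, dist a z = r ∧ dist a z + dist z b = dist a b)
    (x₀ y : X) (hxy : y ≠ x₀)
    (Shadow : X → X → ℝ → Set X)
    (hShadow : ∀ (y' x₁ : X) (ρ : ℝ), Shadow y' x₁ ρ =
      {z : X | dist x₁ z = ρ ∧ dist y' x₁ + dist x₁ z = dist y' z}) :
    ∀ ρ ε : ℝ, 0 < ρ → 0 < ε → ∃ δ > 0, ∀ x₁ : X,
      dist x₀ x₁ < δ → dist y x₁ = dist y x₀ →
      Shadow y x₁ ρ ⊆ {w : X | ∃ z ∈ Shadow y x₀ ρ, dist w z < ε} :=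
  stmt7_general x₀ y Shadow hShadow
end

section
/- Let X be a metric tree (a tree with all edges of the same length 1/n for a fixed n ∈ ℕ, viewed as an ℝ-tree with at least one edge) and fix 0 < α < β < 1/(2n). Let A_α (resp. A_β) be the set of points at distance α (resp. β) from the nearest vertex along an edge. Define φ : A_α ∪ A_β → A_α ∪ A_β by swapping, on each edge [a,b], the point at distance α from a with the point at distance β from a (and similarly from b). Then φ is a bijection of A = A_α ∪ A_β that is an isometry of A with respect to the grasshopper metric G_d, i.e., G_d(φ(p), φ(q)) = G_d(p,q) for all p, q ∈ A. -/
/-!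
Every distance between two points of `A` on non-incident edges is a minimum of four numbers
`(d + s) / n`, with `d` a tree distance and `s` built from the scaled offsets `x = n·off`:
`s ∈ {x + y, 1 + x - y, 1 - x + y, 2 - x - y}`. If the two points carry different offsets, no
`s` is an integer, so the distance is never `1`. If they carry the same offset, the values of
`s` are `2x ∈ (0,1)`, `1`, `1`, `2 - 2x ∈ (1,2)`; whether the minimum is `1` only depends on
which integer cell each term lies in, which is the same for `α` and `β`. Points on the same
edge are never at distance `1`. So `φ` preserves unit jumps, and being an involution it
preserves the grasshopper distance.
-/

section

variable {R : Type*} [Ring R] [LinearOrder R] [FloorRing R]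

def SameIntCell (x y : R) : Prop := ⌊x⌋ = ⌊y⌋ ∧ ⌈x⌉ = ⌈y⌉

namespace SameIntCell

variable {x y x' y' : R}

lemma of_eq (h : x = y) : SameIntCell x y := h ▸ ⟨rfl, rfl⟩

lemma min (h : SameIntCell x y) (h' : SameIntCell x' y') :
    SameIntCell (min x x') (min y y') := by
  refine ⟨?_, ?_⟩
  · rw [Int.floor_mono.map_min, Int.floor_mono.map_min, h.1, h'.1]
  · rw [Int.ceil_mono.map_min, Int.ceil_mono.map_min, h.2, h'.2]

lemma of_mem_Ioo {m : ℤ} (hx : x ∈ Set.Ioo (m : R) (m + 1)) (hy : y ∈ Set.Ioo (m : R) (m + 1)) :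
    SameIntCell x y := by
  have floor_eq {z : R} (hz : z ∈ Set.Ioo (m : R) (m + 1)) : ⌊z⌋ = m :=
    Int.floor_eq_iff.2 ⟨hz.1.le, hz.2⟩
  have ceil_eq {z : R} (hz : z ∈ Set.Ioo (m : R) (m + 1)) : ⌈z⌉ = m + 1 :=
    Int.ceil_eq_iff.2
      ⟨by push_cast; rw [add_sub_cancel_right]; exact hz.1, by push_cast; exact hz.2.le⟩
  exact ⟨(floor_eq hx).trans (floor_eq hy).symm, (ceil_eq hx).trans (ceil_eq hy).symm⟩

end SameIntCell

variable [IsStrictOrderedRing R]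

lemma SameIntCell.eq_intCast_iff {x y : R} (h : SameIntCell x y) (m : ℤ) : x = m ↔ y = m := by
  have key (z : R) : z = m ↔ ⌊z⌋ = m ∧ ⌈z⌉ = m := by
    refine ⟨fun hz => by simp [hz], fun ⟨hf, hc⟩ => le_antisymm ?_ ?_⟩
    · exact Int.ceil_le.1 hc.le
    · exact Int.le_floor.1 hf.ge
  rw [key, key, h.1, h.2]

lemma ne_intCast_of_abs_sub_lt_one {x : R} {m : ℤ} (h : |x - m| < 1) (hne : x ≠ m) (k : ℤ) :
    x ≠ k := by
  rintro rfl
  have : |k - m| < 1 := by exact_mod_cast (show ((|k - m| : ℤ) : R) < 1 by push_cast; exact h)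
  exact hne (by rw [sub_eq_zero.1 (Int.abs_lt_one_iff.1 this)])

end

section EndpointRoutes

open Set

variable {n : ℕ} {x y a b : ℝ} {d₁₁ d₁₂ d₂₁ d₂₂ : ℕ}

/-- Length of the shortest route from the point at offset `x` from the first endpoint of an edge
to the point at offset `y` from the first endpoint of another edge, through the endpoints; `dᵢⱼ` is
the tree distance from the `i`-th endpoint of the first edge to the `j`-th one of the second, and
edges have length `1 / n`. -/
noncomputable def distViaEndpoints (n : ℕ) (x y : ℝ) (d₁₁ d₁₂ d₂₁ d₂₂ : ℕ) : ℝ :=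
  min (min (x + (d₁₁ : ℝ) / n + y) (x + (d₁₂ : ℝ) / n + (1 / n - y)))
      (min ((1 / n - x) + (d₂₁ : ℝ) / n + y) ((1 / n - x) + (d₂₂ : ℝ) / n + (1 / n - y)))

lemma natCast_mul_distViaEndpoints (hn : n ≠ 0) :
    n * distViaEndpoints n x y d₁₁ d₁₂ d₂₁ d₂₂
      = distViaEndpoints 1 (n * x) (n * y) d₁₁ d₁₂ d₂₁ d₂₂ := by
  have hn' : (n : ℝ) ≠ 0 := Nat.cast_ne_zero.2 hn
  simp only [distViaEndpoints, mul_min_of_nonneg _ _ (Nat.cast_nonneg n), Nat.cast_one, div_one]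
  congr 2 <;> field_simp

lemma distViaEndpoints_eq_one_iff (hn : n ≠ 0) :
    distViaEndpoints n x y d₁₁ d₁₂ d₂₁ d₂₂ = 1
      ↔ distViaEndpoints 1 (n * x) (n * y) d₁₁ d₁₂ d₂₁ d₂₂ = (n : ℤ) := by
  rw [← natCast_mul_distViaEndpoints hn, Int.cast_natCast]
  exact (mul_eq_left₀ (Nat.cast_ne_zero.2 hn)).symm

lemma sameIntCell_distViaEndpoints_one_self (hx : x ∈ Ioo 0 (1 / 2)) (hy : y ∈ Ioo 0 (1 / 2)) :
    SameIntCell (distViaEndpoints 1 x x d₁₁ d₁₂ d₂₁ d₂₂)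
      (distViaEndpoints 1 y y d₁₁ d₁₂ d₂₁ d₂₂) := by
  obtain ⟨hx₀, hx₁⟩ := hx
  obtain ⟨hy₀, hy₁⟩ := hy
  simp only [distViaEndpoints, Nat.cast_one, div_one]
  refine .min (.min ?_ (.of_eq (by ring))) (.min (.of_eq (by ring)) ?_)
  · exact .of_mem_Ioo (m := d₁₁) (by push_cast; constructor <;> linarith)
      (by push_cast; constructor <;> linarith)
  · exact .of_mem_Ioo (m := d₂₂ + 1) (by push_cast; constructor <;> linarith)
      (by push_cast; constructor <;> linarith)

lemma distViaEndpoints_one_ne_intCast (hx : x ∈ Ioo 0 (1 / 2)) (hy : y ∈ Ioo 0 (1 / 2))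
    (hxy : x ≠ y) (k : ℤ) : distViaEndpoints 1 x y d₁₁ d₁₂ d₂₁ d₂₂ ≠ k := by
  obtain ⟨hx₀, hx₁⟩ := hx
  obtain ⟨hy₀, hy₁⟩ := hy
  simp only [distViaEndpoints, Nat.cast_one, div_one]
  refine min_rec' (· ≠ (k : ℝ)) (min_rec' (· ≠ (k : ℝ)) ?_ ?_) (min_rec' (· ≠ (k : ℝ)) ?_ ?_)
  · refine ne_intCast_of_abs_sub_lt_one (m := d₁₁) ?_ ?_ k <;> push_cast
    · rw [abs_lt]; constructor <;> linarith
    · exact ne_of_gt (by linarith)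
  · refine ne_intCast_of_abs_sub_lt_one (m := d₁₂ + 1) ?_ ?_ k <;> push_cast
    · rw [abs_lt]; constructor <;> linarith
    · exact fun h => hxy (by linarith)
  · refine ne_intCast_of_abs_sub_lt_one (m := d₂₁ + 1) ?_ ?_ k <;> push_cast
    · rw [abs_lt]; constructor <;> linarith
    · exact fun h => hxy (by linarith)
  · refine ne_intCast_of_abs_sub_lt_one (m := d₂₂ + 2) ?_ ?_ k <;> push_cast
    · rw [abs_lt]; constructor <;> linarith
    · exact ne_of_lt (by linarith)

lemma natCast_mul_mem_Ioo (hn : 0 < n) (ha : a ∈ Ioo 0 (1 / (2 * (n : ℝ)))) :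
    n * a ∈ Ioo 0 (1 / 2) := by
  have hn' : (0 : ℝ) < n := Nat.cast_pos.2 hn
  refine ⟨mul_pos hn' ha.1, ?_⟩
  calc n * a < n * (1 / (2 * n)) := mul_lt_mul_of_pos_left ha.2 hn'
    _ = 1 / 2 := by field_simp

lemma distViaEndpoints_self_eq_one_iff (hn : 0 < n) (ha : a ∈ Ioo 0 (1 / (2 * (n : ℝ))))
    (hb : b ∈ Ioo 0 (1 / (2 * (n : ℝ)))) :
    distViaEndpoints n a a d₁₁ d₁₂ d₂₁ d₂₂ = 1 ↔ distViaEndpoints n b b d₁₁ d₁₂ d₂₁ d₂₂ = 1 := by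
  rw [distViaEndpoints_eq_one_iff hn.ne', distViaEndpoints_eq_one_iff hn.ne']
  exact (sameIntCell_distViaEndpoints_one_self (natCast_mul_mem_Ioo hn ha)
    (natCast_mul_mem_Ioo hn hb)).eq_intCast_iff _

lemma distViaEndpoints_ne_one (hn : 0 < n) (ha : a ∈ Ioo 0 (1 / (2 * (n : ℝ))))
    (hb : b ∈ Ioo 0 (1 / (2 * (n : ℝ)))) (hab : a ≠ b) :
    distViaEndpoints n a b d₁₁ d₁₂ d₂₁ d₂₂ ≠ 1 := by
  rw [Ne, distViaEndpoints_eq_one_iff hn.ne']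
  refine distViaEndpoints_one_ne_intCast (natCast_mul_mem_Ioo hn ha)
    (natCast_mul_mem_Ioo hn hb) ?_ _
  exact fun h => hab (mul_left_cancel₀ (Nat.cast_ne_zero.2 hn.ne') h)

lemma distViaEndpoints_not_eq_one_iff (hn : 0 < n) {off : Bool → ℝ}
    (hoff : ∀ c, off c ∈ Ioo 0 (1 / (2 * (n : ℝ)))) (hoff_ne : off true ≠ off false) (b c : Bool) :
    distViaEndpoints n (off !b) (off !c) d₁₁ d₁₂ d₂₁ d₂₂ = 1
      ↔ distViaEndpoints n (off b) (off c) d₁₁ d₁₂ d₂₁ d₂₂ = 1 := by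
  have ne_one {b c : Bool} (hbc : b ≠ c) :
      distViaEndpoints n (off b) (off c) d₁₁ d₁₂ d₂₁ d₂₂ ≠ 1 :=
    distViaEndpoints_ne_one hn (hoff b) (hoff c)
      (by cases b <;> cases c <;> simp_all [eq_comm])
  by_cases hbc : b = c
  · subst hbc
    exact distViaEndpoints_self_eq_one_iff hn (hoff _) (hoff _)
  · exact iff_of_false (ne_one (by simpa using hbc)) (ne_one hbc)

lemma one_div_two_mul_natCast_le_half (hn : 0 < n) : 1 / (2 * (n : ℝ)) ≤ 1 / 2 :=
  one_div_le_one_div_of_le two_pos (le_mul_of_one_le_right zero_le_two (Nat.one_le_cast.2 hn))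

lemma abs_sub_lt_one_of_mem_Ioo (hn : 0 < n) (ha : a ∈ Ioo 0 (1 / (2 * (n : ℝ))))
    (hb : b ∈ Ioo 0 (1 / (2 * (n : ℝ)))) : |a - b| < 1 := by
  have := one_div_two_mul_natCast_le_half hn
  rw [abs_lt]; constructor <;> linarith [ha.1, ha.2, hb.1, hb.2]

lemma abs_sub_one_div_sub_lt_one_of_mem_Ioo (hn : 0 < n) (ha : a ∈ Ioo 0 (1 / (2 * (n : ℝ))))
    (hb : b ∈ Ioo 0 (1 / (2 * (n : ℝ)))) : |a - (1 / n - b)| < 1 := by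
  have := one_div_two_mul_natCast_le_half hn
  have hn' : 1 / (n : ℝ) = 2 * (1 / (2 * n)) := by field_simp
  rw [abs_lt, hn']; constructor <;> linarith [ha.1, ha.2, hb.1, hb.2]

end EndpointRoutes

section Grasshopper

variable {P : Type*}

def jumpLengths (R : P → P → Prop) (p q : P) : Set ℕ∞ :=
  {m | ∃ k : ℕ, m = (k : ℕ∞) ∧ ∃ j : ℕ → P, j 0 = p ∧ j k = q ∧ ∀ i < k, R (j i) (j (i + 1))}

lemma jumpLengths_subset_map {R : P → P → Prop} {f : P → P} (hf : ∀ p q, R p q → R (f p) (f q))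
    (p q : P) : jumpLengths R p q ⊆ jumpLengths R (f p) (f q) := by
  rintro m ⟨k, rfl, j, rfl, rfl, hj⟩
  exact ⟨k, rfl, f ∘ j, rfl, rfl, fun i hi => hf _ _ (hj i hi)⟩

lemma jumpLengths_map_of_involutive {R : P → P → Prop} {f : P → P} (hf : Function.Involutive f)
    (hR : ∀ p q, R (f p) (f q) ↔ R p q) (p q : P) :
    jumpLengths R (f p) (f q) = jumpLengths R p q := by
  have hmap := jumpLengths_subset_map (fun p q => (hR p q).2)
  refine Set.Subset.antisymm ?_ (hmap p q)
  simpa only [hf p, hf q] using hmap (f p) (f q)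

end Grasshopper

theorem stmt8_general {V : Type*} [DecidableEq V] (G : SimpleGraph V)
    (n : ℕ) (hn : 0 < n) (α β : ℝ)
    (hα : 0 < α) (hαβ : α < β) (hβ : β < 1 / (2 * n))
    (off : Bool → ℝ) (hofft : off true = α) (hofff : off false = β)
    (distP : ({e : V × V // G.Adj e.1 e.2} × Bool) →
      ({e : V × V // G.Adj e.1 e.2} × Bool) → ℝ)
    (hdistP : ∀ p q : {e : V × V // G.Adj e.1 e.2} × Bool, distP p q =
      if p.1.val = q.1.val then |off p.2 - off q.2|
      else if p.1.val.1 = q.1.val.2 ∧ p.1.val.2 = q.1.val.1 then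
        |off p.2 - (1 / n - off q.2)|
      else
        min (min (off p.2 + (G.dist p.1.val.1 q.1.val.1 : ℝ) / n + off q.2)
                 (off p.2 + (G.dist p.1.val.1 q.1.val.2 : ℝ) / n + (1 / n - off q.2)))
            (min ((1 / n - off p.2) + (G.dist p.1.val.2 q.1.val.1 : ℝ) / n + off q.2)
                 ((1 / n - off p.2) + (G.dist p.1.val.2 q.1.val.2 : ℝ) / n
                   + (1 / n - off q.2))))
    (Gd : ({e : V × V // G.Adj e.1 e.2} × Bool) →
      ({e : V × V // G.Adj e.1 e.2} × Bool) → ℕ∞)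
    (hGd : ∀ p q : {e : V × V // G.Adj e.1 e.2} × Bool, Gd p q =
      sInf {m : ℕ∞ | ∃ k : ℕ, m = (k : ℕ∞) ∧
        ∃ j : ℕ → ({e : V × V // G.Adj e.1 e.2} × Bool),
          j 0 = p ∧ j k = q ∧ ∀ i < k, distP (j i) (j (i + 1)) = 1})
    (φ : ({e : V × V // G.Adj e.1 e.2} × Bool) → ({e : V × V // G.Adj e.1 e.2} × Bool))
    (hφ : ∀ p, φ p = (p.1, !p.2)) :
    Function.Bijective φ ∧ ∀ p q, Gd (φ p) (φ q) = Gd p q := by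
  have hoff : ∀ b, off b ∈ Set.Ioo 0 (1 / (2 * (n : ℝ))) := by
    rintro (_ | _)
    · exact hofff ▸ ⟨hα.trans hαβ, hβ⟩
    · exact hofft ▸ ⟨hα, hαβ.trans hβ⟩
  have hoff_ne : off true ≠ off false := by rw [hofft, hofff]; exact hαβ.ne
  have hφ_invol : Function.Involutive φ := fun p => by simp only [hφ, Bool.not_not]
  have hstep : ∀ p q, distP (φ p) (φ q) = 1 ↔ distP p q = 1 := by
    intro p q
    simp only [hdistP, hφ]
    split_ifs
    · exact iff_of_false (abs_sub_lt_one_of_mem_Ioo hn (hoff _) (hoff _)).ne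
        (abs_sub_lt_one_of_mem_Ioo hn (hoff _) (hoff _)).ne
    · exact iff_of_false (abs_sub_one_div_sub_lt_one_of_mem_Ioo hn (hoff _) (hoff _)).ne
        (abs_sub_one_div_sub_lt_one_of_mem_Ioo hn (hoff _) (hoff _)).ne
    · exact distViaEndpoints_not_eq_one_iff hn hoff hoff_ne p.2 q.2
  refine ⟨hφ_invol.bijective, fun p q => ?_⟩
  rw [hGd, hGd]
  exact congrArg sInf
    (jumpLengths_map_of_involutive (R := fun x y => distP x y = 1) hφ_invol hstep p q)

/-- Grasshopper isometry of a metric tree with all edges of length `1/n`.  The tree is a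
combinatorial tree `G` on vertices `V`; a point of `A = A_α ∪ A_β` is encoded as an
oriented edge `(a,b)` together with a Boolean choosing the offset `α` or `β` from the
endpoint `a`.  `distP` is the induced path metric between such points, `Gd` the
grasshopper distance (minimal number of unit jumps, `∞` if none).  The map `φ` swapping,
on each edge and from each endpoint, the point at distance `α` with the point at distance
`β` is a bijection of `A` and an isometry for the grasshopper metric. -/
theorem stmt8 {V : Type*} [DecidableEq V] (G : SimpleGraph V) (hG : G.IsTree)
    (hedge : ∃ a b : V, G.Adj a b)
    (n : ℕ) (hn : 0 < n) (α β : ℝ)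
    (hα : 0 < α) (hαβ : α < β) (hβ : β < 1 / (2 * n))
    (off : Bool → ℝ) (hofft : off true = α) (hofff : off false = β)
    (distP : ({e : V × V // G.Adj e.1 e.2} × Bool) →
      ({e : V × V // G.Adj e.1 e.2} × Bool) → ℝ)
    (hdistP : ∀ p q : {e : V × V // G.Adj e.1 e.2} × Bool, distP p q =
      if p.1.val = q.1.val then |off p.2 - off q.2|
      else if p.1.val.1 = q.1.val.2 ∧ p.1.val.2 = q.1.val.1 then
        |off p.2 - (1 / n - off q.2)|
      else
        min (min (off p.2 + (G.dist p.1.val.1 q.1.val.1 : ℝ) / n + off q.2)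
                 (off p.2 + (G.dist p.1.val.1 q.1.val.2 : ℝ) / n + (1 / n - off q.2)))
            (min ((1 / n - off p.2) + (G.dist p.1.val.2 q.1.val.1 : ℝ) / n + off q.2)
                 ((1 / n - off p.2) + (G.dist p.1.val.2 q.1.val.2 : ℝ) / n
                   + (1 / n - off q.2))))
    (Gd : ({e : V × V // G.Adj e.1 e.2} × Bool) →
      ({e : V × V // G.Adj e.1 e.2} × Bool) → ℕ∞)
    (hGd : ∀ p q : {e : V × V // G.Adj e.1 e.2} × Bool, Gd p q =
      sInf {m : ℕ∞ | ∃ k : ℕ, m = (k : ℕ∞) ∧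
        ∃ j : ℕ → ({e : V × V // G.Adj e.1 e.2} × Bool),
          j 0 = p ∧ j k = q ∧ ∀ i < k, distP (j i) (j (i + 1)) = 1})
    (φ : ({e : V × V // G.Adj e.1 e.2} × Bool) → ({e : V × V // G.Adj e.1 e.2} × Bool))
    (hφ : ∀ p, φ p = (p.1, !p.2)) :
    Function.Bijective φ ∧ ∀ p q, Gd (φ p) (φ q) = Gd p q :=
  stmt8_general G n hn α β hα hαβ hβ off hofft hofff distP hdistP Gd hGd φ hφ
end

section
/- Let (X,d) be a metric space that is not grasshopper-jumps connected, let A ⊆ X be a grasshopper-invariant subset (a union of grasshopper-jump components), and suppose φ : A → A is a bijection with the property that d(z₁,z₂) = 1 iff d(φ(z₁),φ(z₂)) = 1 for z₁,z₂ ∈ A, and there exist y ∈ X \ A and z ∈ A with d(y,z) ≠ d(y,φ(z)). Then the map f : X → X defined by f(p) = φ(p) for p ∈ A and f(p) = p otherwise is a bijection of X preserving the unit distance in both directions (d(p,q) = 1 iff d(f(p),f(q)) = 1) which is not an isometry. -/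
/-!
A set closed under unit steps contains, with each of its points, every point at distance 1 from
it, so no unit-distance pair meets both `A` and its complement; hence the extension of `φ` by the
identity preserves unit distance. It is no isometry since `d(f y, f z) = d(y, φ z) ≠ d(y, z)`.
-/

open scoped Classical

namespace Set

variable {α : Type*} {s : Set α} [DecidablePred (· ∈ s)] {g : α → α}

theorem BijOn.bijective_piecewise_id (h : BijOn g s s) : Function.Bijective (s.piecewise g id) := by
  refine ⟨(injective_piecewise_iff s).2 ⟨h.injOn, Function.injective_id.injOn, ?_⟩, ?_⟩
  · rintro x hx y hy rfl
    exact hy (h.mapsTo hx)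
  · rw [← range_eq_univ, range_piecewise, h.image_eq, image_id, union_compl_self]

theorem piecewise_id_rel_iff {r : α → α → Prop} (hr : ∀ x y, r x y → r y x)
    (hs : ∀ x ∈ s, ∀ y, r x y → y ∈ s) (hg : MapsTo g s s)
    (hgr : ∀ x ∈ s, ∀ y ∈ s, (r x y ↔ r (g x) (g y))) (p q : α) :
    r p q ↔ r (s.piecewise g id p) (s.piecewise g id q) := by
  have h_straddle : ∀ x ∈ s, ∀ y ∉ s, ¬ r x y := fun x hx y hy hxy => hy (hs x hx y hxy)
  by_cases hp : p ∈ s <;> by_cases hq : q ∈ s <;>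
    simp only [piecewise, hp, hq, if_true, if_false, id_eq]
  · exact hgr p hp q hq
  · exact iff_of_false (h_straddle p hp q hq) (h_straddle _ (hg hp) q hq)
  · exact iff_of_false (fun h => h_straddle q hq p hp (hr _ _ h))
      (fun h => h_straddle _ (hg hq) p hp (hr _ _ h))

end Set

theorem stmt9_general {X : Type*} [MetricSpace X]
    (A : Set X)
    (hinv : ∀ x ∈ A, ∀ y : X,
      Relation.ReflTransGen (fun a b : X => dist a b = 1) x y → y ∈ A)
    (φ : X → X) (hφA : Set.BijOn φ A A)
    (hunit : ∀ z₁ ∈ A, ∀ z₂ ∈ A, (dist z₁ z₂ = 1 ↔ dist (φ z₁) (φ z₂) = 1))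
    (hchange : ∃ y ∉ A, ∃ z ∈ A, dist y z ≠ dist y (φ z))
    (f : X → X) (hf : ∀ p : X, f p = if p ∈ A then φ p else p) :
    Function.Bijective f ∧
    (∀ p q : X, dist p q = 1 ↔ dist (f p) (f q) = 1) ∧
    ¬ Isometry f := by
  obtain rfl : f = A.piecewise φ id := funext fun p => (hf p).trans rfl
  refine ⟨hφA.bijective_piecewise_id,
    Set.piecewise_id_rel_iff (fun a b h => (dist_comm b a).trans h)
      (fun x hx y h => hinv x hx y (.single h)) hφA.mapsTo hunit, ?_⟩
  obtain ⟨y, hy, z, hz, hne⟩ := hchange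
  intro hiso
  apply hne
  simpa [Set.piecewise_eq_of_mem _ _ _ hz, Set.piecewise_eq_of_notMem _ _ _ hy] using
    (hiso.dist_eq y z).symm

/-- If `A` is a grasshopper-invariant subset of a not grasshopper-jumps connected metric
space, `φ : A → A` a bijection preserving the unit distance on `A`, and some point outside
`A` sees a changed distance, then extending `φ` by the identity gives a bijection of `X`
preserving the unit distance in both directions which is not an isometry. -/
theorem stmt9 {X : Type*} [MetricSpace X]
    (A : Set X)
    (hinv : ∀ x ∈ A, ∀ y : X,
      Relation.ReflTransGen (fun a b : X => dist a b = 1) x y → y ∈ A)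
    (hnotconn : ∃ x y : X, ¬ Relation.ReflTransGen (fun a b : X => dist a b = 1) x y)
    (φ : X → X) (hφA : Set.BijOn φ A A)
    (hunit : ∀ z₁ ∈ A, ∀ z₂ ∈ A, (dist z₁ z₂ = 1 ↔ dist (φ z₁) (φ z₂) = 1))
    (hchange : ∃ y ∉ A, ∃ z ∈ A, dist y z ≠ dist y (φ z))
    (f : X → X) (hf : ∀ p : X, f p = if p ∈ A then φ p else p) :
    Function.Bijective f ∧
    (∀ p q : X, dist p q = 1 ↔ dist (f p) (f q) = 1) ∧
    ¬ Isometry f :=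
  stmt9_general A hinv φ hφA hunit hchange f hf
end
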